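/- Unit modulus and self-duality of g_b: for every real x > 0 one has |g_b(x)| = 1, and g_b(x) = g_{b^{-1}}(x^{1/b²}), where g_{b^{-1}} is defined by the same formula with b replaced by b^{-1}. -/

import Mathlib

noncomputable section

open Complex MeasureTheory Filter Real

/-- The integrand of the contour-integral defining the quantum dilogarithm:
`e^{πtz} / ((e^{πbt}−1)(e^{πb⁻¹t}−1) t)`. -/
def qdIntegrand (b : ℝ) (z t : ℂ) : ℂ :=
  Complex.exp (↑π * t * z) /
    ((Complex.exp (↑π * ↑b * t) - 1) * (Complex.exp (↑π * (↑b)⁻¹ * t) - 1) * t)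

/-- Radius of the small semicircle above `t = 0` (any sufficiently small radius
gives the same value; we fix one symmetric in `b ↔ b⁻¹`). -/
def qdRadius (b : ℝ) : ℝ := min b b⁻¹ / 2

/-- The contour integral `∫_Ω e^{πtz}/((e^{πbt}−1)(e^{πb⁻¹t}−1)) dt/t`, where
the contour `Ω` runs along `ℝ` from `−∞` to `+∞`, deformed by a small semicircle
passing above the singularity at `t = 0`. -/
def qdContour (b : ℝ) (z : ℂ) : ℂ :=
  (∫ t in Set.Iic (-(qdRadius b)), qdIntegrand b z (t : ℂ)) +
  (∫ t in Set.Ici (qdRadius b), qdIntegrand b z (t : ℂ)) -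
  Complex.I * ∫ θ in (0:ℝ)..π,
    qdIntegrand b z ((qdRadius b : ℂ) * Complex.exp (Complex.I * (θ : ℝ))) *
      ((qdRadius b : ℂ) * Complex.exp (Complex.I * (θ : ℝ)))

/-- `ζ_b = exp((πi/2)((b² + b^{-2})/6 + 1/2))`. -/
def zetab (b : ℝ) : ℂ :=
  Complex.exp (↑π * Complex.I / 2 * (((b : ℂ)^2 + ((b : ℂ)⁻¹)^2) / 6 + 1 / 2))

/-- `Q = b + b⁻¹`. -/
def Qb (b : ℝ) : ℝ := b + b⁻¹

/-- The quantum dilogarithm on the strip `0 < Re z < Q`: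
`G_b(z) = conj(ζ_b) · exp(−∫_Ω …)`. -/
def Gstrip (b : ℝ) (z : ℂ) : ℂ :=
  (starRingEnd ℂ) (zetab b) * Complex.exp (-qdContour b z)

/-- `G : ℂ → ℂ` is (a representative of) the meromorphic continuation of the
quantum dilogarithm `G_b`: it is meromorphic on all of `ℂ`, analytic away from
the lattice `{−nb − mb⁻¹ : n, m ∈ ℤ≥0}` of poles, and agrees with the
contour-integral formula on the strip `0 < Re z < Q`. -/
def IsGb (b : ℝ) (G : ℂ → ℂ) : Prop :=
  (∀ z : ℂ, MeromorphicAt G z) ∧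
  (∀ z : ℂ, (∀ n m : ℕ, z ≠ -(n : ℂ) * (b : ℂ) - (m : ℂ) * ((b : ℂ))⁻¹) →
    AnalyticAt ℂ G z) ∧
  (∀ z : ℂ, 0 < z.re → z.re < Qb b → G z = Gstrip b z)


/-- The function `g_b(x) = conj(ζ_b)/G_b(Q/2 + log(x)/(2πib))` for real `x > 0`,
defined relative to a representative `G` of the meromorphic continuation of `G_b`. -/
def gbFun (b : ℝ) (G : ℂ → ℂ) (x : ℝ) : ℂ :=
  (starRingEnd ℂ) (zetab b) /
    G ((Qb b : ℂ) / 2 + (Real.log x : ℂ) / (2 * ↑π * Complex.I * (b : ℂ)))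


/-!
On the critical line `Re z = Q/2` one has `conj z = Q - z`, and the integrand satisfies
`f(Q - z, t) = -f(z, -t)`. Hence complex conjugation composed with the reflection
`t ↦ -conj t`, which maps the contour `Ω` onto itself preserving its orientation, sends the
contour integral `I(z)` to `-I(z)`. So `I(z)` is purely imaginary on the critical line, and
`g_b(x) = exp (I(Q/2 + log x/(2πib)))` has modulus one. Self-duality holds because the
integrand and the contour are symmetric under `b ↔ b⁻¹`, and `x ↦ x^{1/b²}` turns the point
`Q/2 + log x/(2πib)` into the corresponding point for `b⁻¹`.
-/

open ComplexConjugate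

def semicircleIntegral (r : ℝ) (f : ℂ → ℂ) : ℂ :=
  ∫ θ in (0:ℝ)..π, f (r * exp (I * θ)) * (r * exp (I * θ))

/-- The integral along `ℝ` with `[-r, r]` replaced by the upper semicircle of radius `r`,
which `-I * semicircleIntegral r f` traverses from `-r` to `r`. -/
def contourIntegralOmega (r : ℝ) (f : ℂ → ℂ) : ℂ :=
  (∫ t in Set.Iic (-r), f t) + (∫ t in Set.Ici r, f t) - I * semicircleIntegral r f

lemma qdContour_eq_contourIntegralOmega (b : ℝ) (z : ℂ) :
    qdContour b z = contourIntegralOmega (qdRadius b) (qdIntegrand b z) := rfl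

section Reflection

variable {f : ℂ → ℂ}

lemma conj_integral_Iic_of_reflect (hf : ∀ t, conj (f t) = -f (-conj t)) (r : ℝ) :
    conj (∫ t in Set.Iic (-r), f t) = -∫ t in Set.Ici r, f t := by
  rw [← integral_conj, integral_Ici_eq_integral_Ioi, ← integral_comp_neg_Ioi, ← integral_neg]
  simp_rw [hf, Complex.conj_ofReal, Complex.ofReal_neg, neg_neg]

lemma conj_integral_Ici_of_reflect (hf : ∀ t, conj (f t) = -f (-conj t)) (r : ℝ) :
    conj (∫ t in Set.Ici r, f t) = -∫ t in Set.Iic (-r), f t := by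
  rw [← integral_conj, integral_Ici_eq_integral_Ioi, ← integral_comp_neg_Ioi, ← integral_neg]
  simp_rw [hf, Complex.conj_ofReal, Complex.ofReal_neg]

lemma conj_semicircleIntegral_of_reflect (hf : ∀ t, conj (f t) = -f (-conj t)) (r : ℝ) :
    conj (semicircleIntegral r f) = semicircleIntegral r f := by
  have hpoint : ∀ θ : ℝ, -conj (r * exp (I * θ)) = r * exp (I * ↑(π - θ)) := by
    intro θ
    rw [map_mul, Complex.conj_ofReal, ← Complex.exp_conj, map_mul, Complex.conj_I,
      Complex.conj_ofReal, Complex.ofReal_sub, mul_sub, Complex.exp_sub,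
      mul_comm I (π : ℂ), Complex.exp_pi_mul_I, neg_mul, Complex.exp_neg]
    ring
  set g : ℝ → ℂ := fun θ => f (r * exp (I * θ)) * (r * exp (I * θ)) with hg_def
  have hg : ∀ θ, conj (g θ) = g (π - θ) := by
    intro θ
    simp only [hg_def]
    rw [map_mul, hf, ← hpoint]
    ring
  calc conj (∫ θ in (0:ℝ)..π, g θ) = ∫ θ in (0:ℝ)..π, g (π - θ) := by
        simp_rw [← intervalIntegral.intervalIntegral_conj, hg]
    _ = ∫ θ in (0:ℝ)..π, g θ := by
        rw [intervalIntegral.integral_comp_sub_left g π, sub_self, sub_zero]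

lemma conj_contourIntegralOmega_of_reflect (hf : ∀ t, conj (f t) = -f (-conj t)) (r : ℝ) :
    conj (contourIntegralOmega r f) = -contourIntegralOmega r f := by
  rw [contourIntegralOmega, map_sub, map_add, map_mul, Complex.conj_I,
    conj_integral_Iic_of_reflect hf, conj_integral_Ici_of_reflect hf,
    conj_semicircleIntegral_of_reflect hf]
  ring

end Reflection

lemma qdIntegrand_Qb_sub (b : ℝ) (z t : ℂ) :
    qdIntegrand b (Qb b - z) t = -qdIntegrand b z (-t) := by
  have hnum : exp (π * t * (Qb b - z)) =
      exp (π * b * t) * exp (π * (b : ℂ)⁻¹ * t) * exp (π * (-t) * z) := by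
    rw [← Complex.exp_add, ← Complex.exp_add, Qb]; push_cast; ring_nf
  have hden : (exp (π * b * (-t)) - 1) * (exp (π * (b : ℂ)⁻¹ * (-t)) - 1) * (-t) =
      -((exp (π * b * t) - 1) * (exp (π * (b : ℂ)⁻¹ * t) - 1) * t /
        (exp (π * b * t) * exp (π * (b : ℂ)⁻¹ * t))) := by
    simp only [mul_neg, Complex.exp_neg]
    field_simp
    ring
  rw [qdIntegrand, qdIntegrand, hnum, hden, div_neg, neg_neg, div_div_eq_mul_div]
  ring

lemma conj_qdIntegrand (b : ℝ) (z t : ℂ) :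
    conj (qdIntegrand b z t) = qdIntegrand b (conj z) (conj t) := by
  simp only [qdIntegrand, map_div₀, map_mul, map_sub, map_one, ← Complex.exp_conj, conj_ofReal,
    map_inv₀]

lemma conj_eq_Qb_sub_of_re {b : ℝ} {z : ℂ} (hz : z.re = Qb b / 2) : conj z = Qb b - z := by
  apply Complex.ext <;> simp only [conj_re, conj_im, sub_re, sub_im, ofReal_re, ofReal_im] <;>
    linarith

lemma conj_qdIntegrand_of_re {b : ℝ} {z : ℂ} (hz : z.re = Qb b / 2) (t : ℂ) :
    conj (qdIntegrand b z t) = -qdIntegrand b z (-conj t) := by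
  rw [conj_qdIntegrand, conj_eq_Qb_sub_of_re hz, qdIntegrand_Qb_sub]

lemma qdContour_re_eq_zero {b : ℝ} {z : ℂ} (hz : z.re = Qb b / 2) : (qdContour b z).re = 0 := by
  have h := congrArg re <|
    conj_contourIntegralOmega_of_reflect (conj_qdIntegrand_of_re hz) (qdRadius b)
  rw [conj_re, neg_re, ← qdContour_eq_contourIntegralOmega] at h
  linarith

lemma qdIntegrand_inv (b : ℝ) : qdIntegrand b⁻¹ = qdIntegrand b := by
  funext z t
  rw [qdIntegrand, qdIntegrand, ofReal_inv, inv_inv]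
  ring

lemma qdRadius_inv (b : ℝ) : qdRadius b⁻¹ = qdRadius b := by
  rw [qdRadius, qdRadius, inv_inv, min_comm]

lemma qdContour_inv (b : ℝ) : qdContour b⁻¹ = qdContour b := by
  funext z
  rw [qdContour_eq_contourIntegralOmega, qdContour_eq_contourIntegralOmega, qdIntegrand_inv,
    qdRadius_inv]

lemma Qb_inv (b : ℝ) : Qb b⁻¹ = Qb b := by
  rw [Qb, Qb, inv_inv, add_comm]

lemma Qb_pos {b : ℝ} (hb : 0 < b) : 0 < Qb b := by
  rw [Qb]; positivity

def gbPoint (b x : ℝ) : ℂ := (Qb b : ℂ) / 2 + (Real.log x : ℂ) / (2 * π * I * b)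

lemma gbFun_eq_div (b : ℝ) (G : ℂ → ℂ) (x : ℝ) :
    gbFun b G x = conj (zetab b) / G (gbPoint b x) := rfl

lemma gbPoint_re (b x : ℝ) : (gbPoint b x).re = Qb b / 2 := by
  simp [gbPoint, Complex.div_re]

lemma gbPoint_inv_rpow {b x : ℝ} (hb : b ≠ 0) (hx : 0 < x) :
    gbPoint b⁻¹ (x ^ (1 / b ^ 2)) = gbPoint b x := by
  rw [gbPoint, gbPoint, Qb_inv, Real.log_rpow hx]
  have : (b : ℂ) ≠ 0 := ofReal_ne_zero.2 hb
  have : (π : ℂ) ≠ 0 := ofReal_ne_zero.2 Real.pi_ne_zero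
  push_cast
  field_simp

lemma gbFun_eq_exp_qdContour {b : ℝ} (hb : 0 < b) {G : ℂ → ℂ} (hG : IsGb b G) (x : ℝ) :
    gbFun b G x = exp (qdContour b (gbPoint b x)) := by
  have hQ := Qb_pos hb
  rw [gbFun_eq_div, hG.2.2 _ (by rw [gbPoint_re]; linarith) (by rw [gbPoint_re]; linarith), Gstrip,
    div_mul_cancel_left₀ (by simp [zetab]), ← Complex.exp_neg, neg_neg]

theorem gb_unit_modulus_self_duality_general (b : ℝ) (hb0 : 0 < b)
    (G G' : ℂ → ℂ)
    (hG : IsGb b G) (hG' : IsGb b⁻¹ G') (x : ℝ) (hx : 0 < x) :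
    ‖gbFun b G x‖ = 1 ∧
    gbFun b G x = gbFun b⁻¹ G' (x ^ (1 / b ^ 2)) := by
  rw [gbFun_eq_exp_qdContour hb0 hG, gbFun_eq_exp_qdContour (inv_pos.2 hb0) hG',
    gbPoint_inv_rpow hb0.ne' hx, qdContour_inv]
  exact ⟨by rw [norm_exp, qdContour_re_eq_zero (gbPoint_re b x), Real.exp_zero], rfl⟩

/-- Unit modulus and self-duality of `g_b`: for every real `x > 0`,
`|g_b(x)| = 1` and `g_b(x) = g_{b⁻¹}(x^{1/b²})`, where `g_{b⁻¹}` is defined by the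
same formula with `b` replaced by `b⁻¹`. -/
theorem gb_unit_modulus_self_duality (b : ℝ) (hb0 : 0 < b) (hb1 : b < 1)
    (hirr : Irrational (b ^ 2)) (G G' : ℂ → ℂ)
    (hG : IsGb b G) (hG' : IsGb b⁻¹ G') (x : ℝ) (hx : 0 < x) :
    ‖gbFun b G x‖ = 1 ∧
    gbFun b G x = gbFun b⁻¹ G' (x ^ (1 / b ^ 2)) :=
  gb_unit_modulus_self_duality_general b hb0 G G' hG hG' x hx

end
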